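/- arXiv:1705.02205 — 2 statements merged into one kernel-verified Lean document; each statement's English description precedes it below -/
import Mathlib

section
/- Suppose A < 0 and −A · Ĩ(τ_E) < τ_E · (I_m + τ_E), where A := −b_E^E/√a_E + (b_I^E/√a_E) · b_E^I N_I(0)² I(1/τ_E) / (√a_I + b_I^I N_I(1/τ_E)² I(0)), Ĩ(τ_E) := ∫_0^∞ e^{-s²/2} e^{s·b_I^E N_I(1/τ_E)/√a_E} (e^{s V_F/√a_E} − e^{s V_R/√a_E}) ds, and I_m := min_{0 ≤ N_E ≤ 1/τ_E} I_1(N_E, N_I(N_E)). Then F(N_E) := N_E(τ_E + I_1(N_E,N_I(N_E))) satisfies F'(N_E) ≥ I_m + τ_E + (A/τ_E)·Ĩ(τ_E) > 0 on (0,1/τ_E), hence F is strictly increasing there and the steady-state system has exactly one solution. -/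
/-!
Write `t = V₀^I/√a_I`, so that `I₂ = K(t)` with `K` strictly decreasing. The equation
`N_I (τ_I + K(t)) = 1` says `√a_I t + b_I^I/(τ_I + K(t)) = b_E^I N_E + const`, whose left side is
strictly increasing in `t`. Hence `t` and `N_I` are monotone in `N_E`, `N_I` is continuous, and the
inverse function theorem gives `N_I' = b_E^I T/(√a_I + b_I^I T)` with `T = N_I² I(N_E)`. Bounding
the two factors of `T` by their values at `0` and `1/τ_E` bounds `N_I'` from below by the quantity
inside `A`, and differentiating `F` gives `F' ≥ I_m + τ_E + (A/τ_E) Ĩ(τ_E)`. Existence follows from the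
intermediate value theorem (`F 0 = 0 < 1 < F (1/τ_E)`), uniqueness from the strict monotonicity of
`F` and of the equation for `N_I` in `N_I`.
-/

/-- K(w_R, w_F) := ∫_0^∞ (e^{-s²/2}/s)(e^{s·w_F} − e^{s·w_R}) ds (Lebesgue integral on (0,∞)). -/
noncomputable def K (wR wF : ℝ) : ℝ :=
  ∫ s in Set.Ioi (0 : ℝ), Real.exp (-s ^ 2 / 2) / s * (Real.exp (s * wF) - Real.exp (s * wR))

/-- I₁(N_E,N_I) with V_0^E(N_E,N_I) := b_E^E N_E − b_I^E N_I + (b_E^E − b_E^E) ν_{E,ext}. -/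
noncomputable def I1 (VR VF bEE bIE aE ν NE NI : ℝ) : ℝ :=
  K ((VR - (bEE * NE - bIE * NI + (bEE - bEE) * ν)) / Real.sqrt aE)
    ((VF - (bEE * NE - bIE * NI + (bEE - bEE) * ν)) / Real.sqrt aE)

/-- I₂(N_E,N_I) with V_0^I(N_E,N_I) := b_E^I N_E − b_I^I N_I + (b_E^I − b_E^E) ν_{E,ext}. -/
noncomputable def I2 (VR VF bEE bEI bII aI ν NE NI : ℝ) : ℝ :=
  K ((VR - (bEI * NE - bII * NI + (bEI - bEE) * ν)) / Real.sqrt aI)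
    ((VF - (bEI * NE - bII * NI + (bEI - bEE) * ν)) / Real.sqrt aI)

/-- I(N_E), with N_I(·) the implicitly defined function. -/
noncomputable def Ifun (VR VF bEE bEI bII aI ν : ℝ) (NIfun : ℝ → ℝ) (NE : ℝ) : ℝ :=
  ∫ s in Set.Ioi (0 : ℝ),
    Real.exp (-s ^ 2 / 2) *
      Real.exp (-((bEI * NE - bII * NIfun NE + (bEI - bEE) * ν) * s) / Real.sqrt aI) *
      (Real.exp (s * VF / Real.sqrt aI) - Real.exp (s * VR / Real.sqrt aI))

/-- A := −b_E^E/√a_E + (b_I^E/√a_E)·b_E^I N_I(0)² I(1/τ_E)/(√a_I + b_I^I N_I(1/τ_E)² I(0)). -/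
noncomputable def Aconst (VR VF bEE bIE bEI bII τE aE aI ν : ℝ) (NIfun : ℝ → ℝ) : ℝ :=
  -(bEE / Real.sqrt aE) + bIE / Real.sqrt aE *
    (bEI * (NIfun 0) ^ 2 * Ifun VR VF bEE bEI bII aI ν NIfun (1 / τE) /
      (Real.sqrt aI + bII * (NIfun (1 / τE)) ^ 2 * Ifun VR VF bEE bEI bII aI ν NIfun 0))

/-- Ĩ(τ_E) := ∫_0^∞ e^{-s²/2} e^{s·b_I^E N_I(1/τ_E)/√a_E}(e^{s V_F/√a_E} − e^{s V_R/√a_E}) ds. -/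
noncomputable def Itilde (VR VF bIE τE aE : ℝ) (NIfun : ℝ → ℝ) : ℝ :=
  ∫ s in Set.Ioi (0 : ℝ),
    Real.exp (-s ^ 2 / 2) * Real.exp (s * bIE * NIfun (1 / τE) / Real.sqrt aE) *
      (Real.exp (s * VF / Real.sqrt aE) - Real.exp (s * VR / Real.sqrt aE))

/-- I_m := min_{0 ≤ N_E ≤ 1/τ_E} I_1(N_E, N_I(N_E)). -/
noncomputable def Imin (VR VF bEE bIE τE aE ν : ℝ) (NIfun : ℝ → ℝ) : ℝ :=
  sInf ((fun NE => I1 VR VF bEE bIE aE ν NE (NIfun NE)) '' Set.Icc 0 (1 / τE))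


open MeasureTheory Real Set Filter Topology

theorem integrableOn_exp_neg_sq_div_two_mul_exp (c : ℝ) :
    IntegrableOn (fun s : ℝ => exp (-s ^ 2 / 2) * exp (s * c)) (Ioi 0) := by
  have h : Integrable fun s : ℝ => exp (c ^ 2 / 2) * exp (-(1 / 2) * (s - c) ^ 2) :=
    ((integrable_exp_neg_mul_sq (by norm_num : (0 : ℝ) < 1 / 2)).comp_sub_right c).const_mul _
  convert h.integrableOn using 2 with s
  rw [← exp_add, ← exp_add]
  ring_nf

theorem exp_sub_exp_le_mul_exp (x y : ℝ) : exp y - exp x ≤ (y - x) * exp y := by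
  have hexp : exp x = exp (x - y) * exp y := by rw [← exp_add, sub_add_cancel]
  nlinarith [add_one_le_exp (x - y), exp_pos y]

theorem setIntegral_pos_of_forall_pos {X : Type*} [MeasurableSpace X] {μ : Measure X} {s : Set X}
    {f : X → ℝ} (hs : MeasurableSet s) (hμs : μ s ≠ 0) (hf : IntegrableOn f s μ)
    (hpos : ∀ x ∈ s, 0 < f x) : 0 < ∫ x in s, f x ∂μ := by
  have hsupp : Function.support f ∩ s = s := inter_eq_right.2 fun x hx => (hpos x hx).ne'
  have hnonneg : 0 ≤ᵐ[μ.restrict s] f := (ae_restrict_mem hs).mono fun x hx => (hpos x hx).le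
  rw [setIntegral_pos_iff_support_of_nonneg_ae hnonneg hf, hsupp]
  exact pos_iff_ne_zero.2 hμs

/-- With `r = V_R/√a`, `f = V_F/√a` and `t = V₀/√a` this is `I₁` or `I₂` as a function of
the mean potential `V₀`. -/
noncomputable def Kt (r f t : ℝ) : ℝ := K (r - t) (f - t)

/-- The integrals `I(N_E)` and `Ĩ(τ_E)` are values of `Jt`. -/
noncomputable def Jt (r f t : ℝ) : ℝ :=
  ∫ s in Ioi 0, exp (-s ^ 2 / 2) * (exp (s * (f - t)) - exp (s * (r - t)))

theorem integrableOn_K_integrand {a b : ℝ} (hab : a ≤ b) :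
    IntegrableOn (fun s => exp (-s ^ 2 / 2) / s * (exp (s * b) - exp (s * a))) (Ioi 0) := by
  refine ((integrableOn_exp_neg_sq_div_two_mul_exp b).const_mul (b - a)).mono' ?_ ?_
  · refine ContinuousOn.aestronglyMeasurable ?_ measurableSet_Ioi
    exact ((continuous_exp.comp (by fun_prop)).continuousOn.div continuousOn_id
      fun s hs => (mem_Ioi.1 hs).ne').mul (by fun_prop)
  · filter_upwards [ae_restrict_mem measurableSet_Ioi] with s (hs : 0 < s)
    have hsab : s * a ≤ s * b := by gcongr
    rw [norm_of_nonneg (mul_nonneg (div_nonneg (exp_pos _).le hs.le)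
      (sub_nonneg.2 (exp_le_exp.2 hsab))), div_mul_eq_mul_div, div_le_iff₀ hs]
    calc exp (-s ^ 2 / 2) * (exp (s * b) - exp (s * a))
        ≤ exp (-s ^ 2 / 2) * ((s * b - s * a) * exp (s * b)) := by
          gcongr; exact exp_sub_exp_le_mul_exp _ _
      _ = (b - a) * (exp (-s ^ 2 / 2) * exp (s * b)) * s := by ring

theorem K_pos {a b : ℝ} (hab : a < b) : 0 < K a b :=
  setIntegral_pos_of_forall_pos measurableSet_Ioi (by simp) (integrableOn_K_integrand hab.le)
    fun s (hs : 0 < s) => by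
      have : exp (s * a) < exp (s * b) := exp_lt_exp.2 (by gcongr)
      have := exp_pos (-s ^ 2 / 2)
      positivity

theorem Kt_pos {r f : ℝ} (hrf : r < f) (t : ℝ) : 0 < Kt r f t := K_pos (by linarith)

theorem integrableOn_Jt_integrand (r f t : ℝ) :
    IntegrableOn (fun s => exp (-s ^ 2 / 2) * (exp (s * (f - t)) - exp (s * (r - t)))) (Ioi 0) := by
  simpa only [mul_sub, Pi.sub_def] using (integrableOn_exp_neg_sq_div_two_mul_exp (f - t)).sub
    (integrableOn_exp_neg_sq_div_two_mul_exp (r - t))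

theorem Jt_pos {r f : ℝ} (hrf : r < f) (t : ℝ) : 0 < Jt r f t :=
  setIntegral_pos_of_forall_pos measurableSet_Ioi (by simp) (integrableOn_Jt_integrand r f t)
    fun s (hs : 0 < s) => by
      have : exp (s * (r - t)) < exp (s * (f - t)) := exp_lt_exp.2 (by gcongr)
      have := exp_pos (-s ^ 2 / 2)
      positivity

theorem Jt_antitone {r f : ℝ} (hrf : r ≤ f) : Antitone (Jt r f) := by
  intro t₁ t₂ ht
  refine setIntegral_mono_on (integrableOn_Jt_integrand r f t₂)
    (integrableOn_Jt_integrand r f t₁) measurableSet_Ioi fun s (hs : 0 < s) => ?_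
  have hfactor : ∀ t, exp (s * (f - t)) - exp (s * (r - t)) =
      (exp (s * f) - exp (s * r)) * exp (-(s * t)) := fun t => by
    rw [sub_mul, ← exp_add, ← exp_add]; ring_nf
  have : exp (s * r) ≤ exp (s * f) := exp_le_exp.2 (by gcongr)
  rw [hfactor, hfactor]
  gcongr

theorem hasDerivAt_Kt {r f : ℝ} (hrf : r ≤ f) (t₀ : ℝ) :
    HasDerivAt (Kt r f) (-Jt r f t₀) t₀ := by
  have hneg : -Jt r f t₀ =
      ∫ s in Ioi 0, -(exp (-s ^ 2 / 2) * (exp (s * (f - t₀)) - exp (s * (r - t₀)))) := by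
    rw [integral_neg]; rfl
  rw [hneg]
  refine (hasDerivAt_integral_of_dominated_loc_of_deriv_le (Metric.ball_mem_nhds t₀ one_pos)
    (F := fun t s => exp (-s ^ 2 / 2) / s * (exp (s * (f - t)) - exp (s * (r - t))))
    (F' := fun t s => -(exp (-s ^ 2 / 2) * (exp (s * (f - t)) - exp (s * (r - t)))))
    (bound := fun s => exp (-s ^ 2 / 2) * exp (s * (f - t₀ + 1)))
    (Eventually.of_forall fun t => (integrableOn_K_integrand (by linarith)).aestronglyMeasurable)
    (integrableOn_K_integrand (by linarith))
    (integrableOn_Jt_integrand r f t₀).neg.aestronglyMeasurable ?_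
    (integrableOn_exp_neg_sq_div_two_mul_exp _) ?_).2
  · filter_upwards [ae_restrict_mem measurableSet_Ioi] with s (hs : 0 < s) t ht
    have ht' : t₀ - 1 < t := by
      have := (abs_lt.1 (mem_ball_iff_norm.1 ht)).1; linarith
    have h₁ : exp (s * (r - t)) ≤ exp (s * (f - t)) := exp_le_exp.2 (by gcongr)
    have h₂ : exp (s * (f - t)) ≤ exp (s * (f - t₀ + 1)) := exp_le_exp.2 (by gcongr; linarith)
    rw [norm_neg, norm_of_nonneg (mul_nonneg (exp_pos _).le (sub_nonneg.2 h₁))]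
    gcongr
    linarith [exp_pos (s * (r - t))]
  · filter_upwards [ae_restrict_mem measurableSet_Ioi] with s (hs : 0 < s) t _
    have hexp : ∀ u, HasDerivAt (fun t => exp (s * (u - t))) (-s * exp (s * (u - t))) t :=
      fun u => by simpa [mul_comm] using ((((hasDerivAt_id t).const_sub u).const_mul s).exp)
    refine (((hexp f).sub (hexp r)).const_mul (exp (-s ^ 2 / 2) / s)).congr_deriv ?_
    field_simp
    ring

theorem Kt_strictAnti {r f : ℝ} (hrf : r < f) : StrictAnti (Kt r f) :=
  strictAnti_of_hasDerivAt_neg (hasDerivAt_Kt hrf.le) fun t => neg_neg_of_pos (Jt_pos hrf t)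

theorem Kt_continuous {r f : ℝ} (hrf : r ≤ f) : Continuous (Kt r f) :=
  continuous_iff_continuousAt.2 fun t => (hasDerivAt_Kt hrf t).continuousAt

section Branch

variable {k N : ℝ → ℝ} {τ σ b₁ b₂ c : ℝ}

theorem strictMono_mul_add_mul_inv (hk : StrictAnti k) (hτk : ∀ t, 0 < τ + k t) (hσ : 0 < σ)
    (hb₂ : 0 ≤ b₂) : StrictMono fun t => σ * t + b₂ * (τ + k t)⁻¹ :=
  (strictMono_mul_left_of_pos hσ).add_monotone fun _ _ h =>
    mul_le_mul_of_nonneg_left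
      (inv_anti₀ (hτk _) ((add_le_add_iff_left τ).2 (hk.antitone h))) hb₂

theorem mul_add_mul_inv_eq_of_mul_eq_one (hσ : σ ≠ 0) {x n : ℝ}
    (hn : n * (τ + k ((b₁ * x - b₂ * n + c) / σ)) = 1) :
    σ * ((b₁ * x - b₂ * n + c) / σ) + b₂ * (τ + k ((b₁ * x - b₂ * n + c) / σ))⁻¹ =
      b₁ * x + c := by
  rw [← eq_inv_of_mul_eq_one_left hn]
  field_simp
  ring

theorem eq_of_mul_eq_one_of_mul_eq_one (hk : StrictAnti k) (hτk : ∀ t, 0 < τ + k t)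
    (hσ : 0 < σ) (hb₂ : 0 ≤ b₂) {x n m : ℝ} (hn : n * (τ + k ((b₁ * x - b₂ * n + c) / σ)) = 1)
    (hm : m * (τ + k ((b₁ * x - b₂ * m + c) / σ)) = 1) : n = m := by
  have hnm : (b₁ * x - b₂ * n + c) / σ = (b₁ * x - b₂ * m + c) / σ :=
    (strictMono_mul_add_mul_inv hk hτk hσ hb₂).injective <| by
      simp only [mul_add_mul_inv_eq_of_mul_eq_one hσ.ne' hn,
        mul_add_mul_inv_eq_of_mul_eq_one hσ.ne' hm]
  rw [eq_inv_of_mul_eq_one_left hn, eq_inv_of_mul_eq_one_left hm, hnm]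

theorem monotoneOn_shift_of_mul_eq_one (hk : StrictAnti k) (hτk : ∀ t, 0 < τ + k t)
    (hσ : 0 < σ) (hb₁ : 0 ≤ b₁) (hb₂ : 0 ≤ b₂)
    (hN : ∀ x, 0 ≤ x → N x * (τ + k ((b₁ * x - b₂ * N x + c) / σ)) = 1) :
    MonotoneOn (fun x => (b₁ * x - b₂ * N x + c) / σ) (Ici 0) := fun x hx y hy hxy =>
  (strictMono_mul_add_mul_inv hk hτk hσ hb₂).le_iff_le.1 <| by
    simp only [mul_add_mul_inv_eq_of_mul_eq_one hσ.ne' (hN x hx),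
      mul_add_mul_inv_eq_of_mul_eq_one hσ.ne' (hN y hy)]
    gcongr

theorem monotoneOn_of_mul_eq_one (hk : StrictAnti k) (hτk : ∀ t, 0 < τ + k t) (hσ : 0 < σ)
    (hb₁ : 0 ≤ b₁) (hb₂ : 0 ≤ b₂)
    (hN : ∀ x, 0 ≤ x → N x * (τ + k ((b₁ * x - b₂ * N x + c) / σ)) = 1) :
    MonotoneOn N (Ici 0) := fun x hx y hy hxy => by
  rw [eq_inv_of_mul_eq_one_left (hN x hx), eq_inv_of_mul_eq_one_left (hN y hy)]
  exact inv_anti₀ (hτk _) ((add_le_add_iff_left τ).2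
    (hk.antitone (monotoneOn_shift_of_mul_eq_one hk hτk hσ hb₁ hb₂ hN hx hy hxy)))

/-- `N` is `b₁ / b₂`-Lipschitz, because `b₂ N x = b₁ x + c - σ t x` with `N` and the shift `t`
both monotone. -/
theorem continuousOn_of_mul_eq_one (hk : StrictAnti k) (hτk : ∀ t, 0 < τ + k t) (hσ : 0 < σ)
    (hb₁ : 0 ≤ b₁) (hb₂ : 0 < b₂)
    (hN : ∀ x, 0 ≤ x → N x * (τ + k ((b₁ * x - b₂ * N x + c) / σ)) = 1) :
    ContinuousOn N (Ici 0) := by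
  have hle : ∀ x ∈ Ici (0 : ℝ), ∀ y ∈ Ici (0 : ℝ), x ≤ y →
      dist (N x) (N y) ≤ b₁ / b₂ * dist x y := fun x hx y hy hxy => by
    have hNxy := monotoneOn_of_mul_eq_one hk hτk hσ hb₁ hb₂.le hN hx hy hxy
    have htxy := monotoneOn_shift_of_mul_eq_one hk hτk hσ hb₁ hb₂.le hN hx hy hxy
    rw [div_le_div_iff_of_pos_right hσ] at htxy
    rw [dist_comm, dist_comm x, dist_eq_norm, dist_eq_norm, norm_of_nonneg (sub_nonneg.2 hNxy),
      norm_of_nonneg (sub_nonneg.2 hxy), div_mul_eq_mul_div, le_div_iff₀ hb₂]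
    linarith
  refine (LipschitzOnWith.of_dist_le' (K := b₁ / b₂) fun x hx y hy => ?_).continuousOn
  rcases le_total x y with hxy | hyx
  · exact hle x hx y hy hxy
  · rw [dist_comm, dist_comm x]; exact hle y hy x hx hyx

/-- The derivative comes from inverting `t ↦ σ t + b₂ / (τ + k t)`, which maps the shift of
the branch at `x` to `b₁ x + c`. -/
theorem hasDerivAt_of_mul_eq_one (hk : StrictAnti k) (hτk : ∀ t, 0 < τ + k t) (hσ : 0 < σ)
    (hb₁ : 0 < b₁) (hb₂ : 0 < b₂)
    (hN : ∀ x, 0 ≤ x → N x * (τ + k ((b₁ * x - b₂ * N x + c) / σ)) = 1) {x j : ℝ}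
    (hx : 0 < x) (hj : 0 ≤ j) (hk' : HasDerivAt k (-j) ((b₁ * x - b₂ * N x + c) / σ)) :
    HasDerivAt N (b₁ * (N x ^ 2 * j) / (σ + b₂ * (N x ^ 2 * j))) x := by
  set t : ℝ → ℝ := fun y => (b₁ * y - b₂ * N y + c) / σ with ht
  have hNx : τ + k (t x) = (N x)⁻¹ := eq_inv_of_mul_eq_one_right (hN x hx.le)
  have ht_cont : ContinuousAt t x := by
    have := (continuousOn_of_mul_eq_one hk hτk hσ hb₁.le hb₂ hN).continuousAt
      (Ici_mem_nhds hx)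
    fun_prop
  have hinv : HasDerivAt (fun u => (σ * u + b₂ * (τ + k u)⁻¹ - c) / b₁)
      ((σ + b₂ * (N x ^ 2 * j)) / b₁) (t x) := by
    refine ((((hasDerivAt_id _).const_mul σ).add (((hk'.const_add τ).inv (hτk _).ne').const_mul
      b₂)).sub_const c |>.div_const b₁).congr_deriv ?_
    rw [hNx]
    field_simp
  have ht' := hinv.of_local_left_inverse ht_cont (by positivity) <| by
    filter_upwards [lt_mem_nhds hx] with y hy
    rw [mul_add_mul_inv_eq_of_mul_eq_one hσ.ne' (hN y hy.le)]
    field_simp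
    ring
  have hN_eq : N = fun y => (b₁ * y + c - σ * t y) / b₂ := by
    funext y
    simp only [ht]
    field_simp
    ring
  rw [hN_eq]
  refine ((((hasDerivAt_id x).const_mul b₁).add_const c).sub (ht'.const_mul σ) |>.div_const b₂
    ).congr_deriv ?_
  rw [← hN_eq]
  field_simp
  ring

end Branch

theorem hasDerivAt_mul_add_comp_shift {k N : ℝ → ℝ} {τ σ b₁ b₂ c x j n' : ℝ}
    (hk : HasDerivAt k (-j) ((b₁ * x - b₂ * N x + c) / σ)) (hN : HasDerivAt N n' x) :
    HasDerivAt (fun y => y * (τ + k ((b₁ * y - b₂ * N y + c) / σ)))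
      (τ + k ((b₁ * x - b₂ * N x + c) / σ) - x * j * ((b₁ - b₂ * n') / σ)) x := by
  have hshift : HasDerivAt (fun y => (b₁ * y - b₂ * N y + c) / σ) ((b₁ - b₂ * n') / σ) x := by
    simpa using
      (((hasDerivAt_id x).const_mul b₁).sub (hN.const_mul b₂)).add_const c |>.div_const σ
  refine ((hasDerivAt_id x).mul ((hk.comp x hshift).const_add τ)).congr_deriv ?_
  simp only [id, one_mul, Function.comp_apply]
  ring

theorem mul_sq_mul_div_le_of_mem_Icc {j t N : ℝ → ℝ} {σ b₁ b₂ X x : ℝ}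
    (hj : Antitone j) (hj0 : ∀ u, 0 ≤ j u) (hN : MonotoneOn N (Ici 0)) (hN0 : 0 ≤ N 0)
    (ht : MonotoneOn t (Ici 0)) (hσ : 0 < σ) (hb₁ : 0 ≤ b₁) (hb₂ : 0 ≤ b₂) (hx : x ∈ Icc 0 X) :
    b₁ * N 0 ^ 2 * j (t X) / (σ + b₂ * N X ^ 2 * j (t 0)) ≤
      b₁ * (N x ^ 2 * j (t x)) / (σ + b₂ * (N x ^ 2 * j (t x))) := by
  have h0 : (0 : ℝ) ∈ Ici 0 := mem_Ici.2 le_rfl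
  have hx0 : x ∈ Ici 0 := hx.1
  have hX : X ∈ Ici 0 := hx.1.trans hx.2
  have hN0x := hN h0 hx0 hx.1
  have hlo : N 0 ^ 2 * j (t X) ≤ N x ^ 2 * j (t x) :=
    mul_le_mul (pow_le_pow_left₀ hN0 hN0x 2) (hj (ht hx0 hX hx.2)) (hj0 _) (sq_nonneg _)
  have hhi : N x ^ 2 * j (t x) ≤ N X ^ 2 * j (t 0) :=
    mul_le_mul (pow_le_pow_left₀ (hN0.trans hN0x) (hN hx0 hX hx.2) 2) (hj (ht h0 hx0 hx.1))
      (hj0 _) (sq_nonneg _)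
  have hT : 0 ≤ N x ^ 2 * j (t x) := mul_nonneg (sq_nonneg _) (hj0 _)
  have hThi := hT.trans hhi
  rw [mul_assoc, mul_assoc b₂]
  calc b₁ * (N 0 ^ 2 * j (t X)) / (σ + b₂ * (N X ^ 2 * j (t 0)))
      ≤ b₁ * (N x ^ 2 * j (t x)) / (σ + b₂ * (N X ^ 2 * j (t 0))) := by gcongr
    _ ≤ b₁ * (N x ^ 2 * j (t x)) / (σ + b₂ * (N x ^ 2 * j (t x))) := by gcongr

theorem div_mul_le_mul_mul_of_neg {A B I J x τ : ℝ} (hA : A < 0) (hAB : A ≤ B) (hJ : 0 ≤ J)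
    (hJI : J ≤ I) (hx : 0 ≤ x) (hτ : 0 < τ) (hxτ : x * τ ≤ 1) :
    A / τ * I ≤ x * J * B := by
  rcases le_or_gt B 0 with hB | hB
  · calc A / τ * I ≤ B / τ * I := by gcongr; linarith
      _ ≤ x * I * B := by
        rw [div_mul_eq_mul_div, div_le_iff₀ hτ]
        nlinarith [mul_nonneg (sub_nonneg.2 hxτ) (mul_nonneg (hJ.trans hJI) (neg_nonneg.2 hB))]
      _ ≤ x * J * B := by
        nlinarith [mul_nonneg hx (mul_nonneg (sub_nonneg.2 hJI) (neg_nonneg.2 hB))]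
  · have : A / τ * I ≤ 0 :=
      mul_nonpos_of_nonpos_of_nonneg (div_nonpos_of_nonpos_of_nonneg hA.le hτ.le) (hJ.trans hJI)
    have : 0 ≤ x * J * B := by positivity
    linarith

theorem add_add_div_mul_pos {m τ A I : ℝ} (hτ : 0 < τ) (h : -A * I < τ * (m + τ)) :
    0 < m + τ + A / τ * I := by
  have hτB : τ * (m + τ + A / τ * I) = τ * (m + τ) - -A * I := by field_simp; ring
  exact pos_of_mul_pos_right (hτB ▸ sub_pos.2 h) hτ.le

theorem exists_mem_Ioo_mul_add_eq_one {g : ℝ → ℝ} {τ : ℝ} (hτ : 0 < τ)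
    (hg : ContinuousOn g (Icc 0 (1 / τ))) (hg0 : 0 < g (1 / τ)) :
    ∃ x ∈ Ioo 0 (1 / τ), x * (τ + g x) = 1 := by
  refine intermediate_value_Ioo (by positivity) (continuousOn_id.mul (continuousOn_const.add hg))
    ⟨by simp, ?_⟩
  show 1 < 1 / τ * (τ + g (1 / τ))
  rw [one_div_mul_eq_div, lt_div_iff₀ hτ]
  linarith

theorem I1_eq_Kt (VR VF bEE bIE aE ν x n : ℝ) :
    I1 VR VF bEE bIE aE ν x n =
      Kt (VR / √aE) (VF / √aE) ((bEE * x - bIE * n + (bEE - bEE) * ν) / √aE) := by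
  simp only [I1, Kt, sub_div]

theorem I2_eq_Kt (VR VF bEE bEI bII aI ν x n : ℝ) :
    I2 VR VF bEE bEI bII aI ν x n =
      Kt (VR / √aI) (VF / √aI) ((bEI * x - bII * n + (bEI - bEE) * ν) / √aI) := by
  simp only [I2, Kt, sub_div]

theorem Ifun_eq_Jt (VR VF bEE bEI bII aI ν : ℝ) (N : ℝ → ℝ) (x : ℝ) :
    Ifun VR VF bEE bEI bII aI ν N x =
      Jt (VR / √aI) (VF / √aI) ((bEI * x - bII * N x + (bEI - bEE) * ν) / √aI) := by
  simp only [Ifun, Jt]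
  congr 1 with s
  rw [mul_assoc, mul_sub, ← exp_add, ← exp_add]
  ring_nf

theorem Itilde_eq_Jt (VR VF bIE τE aE : ℝ) (N : ℝ → ℝ) :
    Itilde VR VF bIE τE aE N = Jt (VR / √aE) (VF / √aE) (-(bIE * N (1 / τE)) / √aE) := by
  simp only [Itilde, Jt]
  congr 1 with s
  rw [mul_assoc, mul_sub, ← exp_add, ← exp_add]
  ring_nf

section Model

variable {VR VF bEE bIE bEI bII τE τI aE aI ν : ℝ} {N : ℝ → ℝ}

theorem I1_pos (hV : VR < VF) (haE : 0 < aE) (x n : ℝ) : 0 < I1 VR VF bEE bIE aE ν x n := by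
  rw [I1_eq_Kt]
  exact Kt_pos (div_lt_div_of_pos_right hV (sqrt_pos.2 haE)) _

theorem continuousOn_I1_comp (hV : VR < VF) {s : Set ℝ} (hN : ContinuousOn N s) :
    ContinuousOn (fun x => I1 VR VF bEE bIE aE ν x (N x)) s := by
  simp only [I1_eq_Kt]
  exact (Kt_continuous (div_le_div_of_nonneg_right hV.le (sqrt_nonneg aE))).comp_continuousOn
    (by fun_prop)

theorem Imin_le_I1 (hV : VR < VF) (haE : 0 < aE) {x : ℝ} (hx : x ∈ Icc 0 (1 / τE)) :
    Imin VR VF bEE bIE τE aE ν N ≤ I1 VR VF bEE bIE aE ν x (N x) :=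
  csInf_le ⟨0, forall_mem_image.2 fun _ _ => (I1_pos hV haE _ _).le⟩ (mem_image_of_mem _ hx)

theorem Aconst_le_of_mem_Icc (hV : VR < VF) (hbIE : 0 ≤ bIE) (hbEI : 0 < bEI) (hbII : 0 < bII)
    (hτI : 0 < τI) (haI : 0 < aI)
    (hN : ∀ x, 0 ≤ x → N x * (τI + I2 VR VF bEE bEI bII aI ν x (N x)) = 1) {x : ℝ}
    (hx : x ∈ Icc 0 (1 / τE)) :
    Aconst VR VF bEE bIE bEI bII τE aE aI ν N ≤ -((bEE - bIE *
      (bEI * (N x ^ 2 * Ifun VR VF bEE bEI bII aI ν N x) /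
        (√aI + bII * (N x ^ 2 * Ifun VR VF bEE bEI bII aI ν N x)))) / √aE) := by
  have hsI : 0 < √aI := sqrt_pos.2 haI
  have hrfI : VR / √aI < VF / √aI := div_lt_div_of_pos_right hV hsI
  have hτk : ∀ t, 0 < τI + Kt (VR / √aI) (VF / √aI) t := fun t =>
    add_pos hτI (Kt_pos hrfI t)
  simp only [I2_eq_Kt] at hN
  rw [Aconst, show ∀ n, -((bEE - bIE * n) / √aE) = -(bEE / √aE) + bIE / √aE * n from
    fun n => by ring]
  gcongr -(bEE / √aE) + bIE / √aE * ?_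
  simp only [Ifun_eq_Jt]
  exact mul_sq_mul_div_le_of_mem_Icc (t := fun y => (bEI * y - bII * N y + (bEI - bEE) * ν) / √aI)
    (Jt_antitone hrfI.le) (fun u => (Jt_pos hrfI u).le)
    (monotoneOn_of_mul_eq_one (Kt_strictAnti hrfI) hτk hsI hbEI.le hbII.le hN)
    (by rw [eq_inv_of_mul_eq_one_left (hN 0 le_rfl)]; exact (inv_pos.2 (hτk _)).le)
    (monotoneOn_shift_of_mul_eq_one (Kt_strictAnti hrfI) hτk hsI hbEI.le hbII.le hN) hsI
    hbEI.le hbII.le hx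

theorem exists_hasDerivAt_ge_bound (hV : VR < VF) (hbEE : 0 ≤ bEE) (hbIE : 0 ≤ bIE)
    (hbEI : 0 < bEI) (hbII : 0 < bII) (hτE : 0 < τE) (hτI : 0 < τI) (haE : 0 < aE)
    (haI : 0 < aI)
    (hN : ∀ x, 0 ≤ x → N x * (τI + I2 VR VF bEE bEI bII aI ν x (N x)) = 1)
    (hA : Aconst VR VF bEE bIE bEI bII τE aE aI ν N < 0) {x : ℝ} (hx : x ∈ Ioo 0 (1 / τE)) :
    ∃ F', HasDerivAt (fun y => y * (τE + I1 VR VF bEE bIE aE ν y (N y))) F' x ∧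
      Imin VR VF bEE bIE τE aE ν N + τE +
        Aconst VR VF bEE bIE bEI bII τE aE aI ν N / τE * Itilde VR VF bIE τE aE N ≤ F' := by
  have hsE : 0 < √aE := sqrt_pos.2 haE
  have hsI : 0 < √aI := sqrt_pos.2 haI
  have hrfE : VR / √aE < VF / √aE := div_lt_div_of_pos_right hV hsE
  have hrfI : VR / √aI < VF / √aI := div_lt_div_of_pos_right hV hsI
  have hτk : ∀ t, 0 < τI + Kt (VR / √aI) (VF / √aI) t := fun t =>
    add_pos hτI (Kt_pos hrfI t)
  have hAle := Aconst_le_of_mem_Icc (aE := aE) hV hbIE hbEI hbII hτI haI hN ⟨hx.1.le, hx.2.le⟩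
  simp only [I2_eq_Kt] at hN
  set T := N x ^ 2 * Ifun VR VF bEE bEI bII aI ν N x
  have hNd : HasDerivAt N (bEI * T / (√aI + bII * T)) x := by
    refine hasDerivAt_of_mul_eq_one (Kt_strictAnti hrfI) hτk hsI hbEI hbII hN hx.1 ?_ ?_ <;>
      rw [Ifun_eq_Jt]
    exacts [(Jt_pos hrfI _).le, hasDerivAt_Kt hrfI.le _]
  have hJ : Jt (VR / √aE) (VF / √aE) ((bEE * x - bIE * N x + (bEE - bEE) * ν) / √aE) ≤
      Itilde VR VF bIE τE aE N := by
    rw [Itilde_eq_Jt]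
    refine Jt_antitone hrfE.le (div_le_div_of_nonneg_right ?_ hsE.le)
    have := monotoneOn_of_mul_eq_one (Kt_strictAnti hrfI) hτk hsI hbEI.le hbII.le hN hx.1.le
      (hx.1.le.trans hx.2.le) hx.2.le
    nlinarith [hx.1]
  have hImin : Imin VR VF bEE bIE τE aE ν N ≤ I1 VR VF bEE bIE aE ν x (N x) :=
    Imin_le_I1 hV haE ⟨hx.1.le, hx.2.le⟩
  rw [I1_eq_Kt] at hImin
  have hbound := div_mul_le_mul_mul_of_neg hA hAle (Jt_pos hrfE _).le hJ hx.1.le hτE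
    ((lt_div_iff₀ hτE).1 hx.2).le
  refine ⟨_, by simpa only [I1_eq_Kt] using
    hasDerivAt_mul_add_comp_shift (τ := τE) (hasDerivAt_Kt hrfE.le _) hNd, ?_⟩
  linarith

end Model

theorem unique_steady_state_of_A_neg_general (VR VF bEE bIE bEI bII τE τI aE aI ν : ℝ)
    (hV : VR < VF) (hbEE : 0 < bEE) (hbIE : 0 < bIE) (hbEI : 0 < bEI) (hbII : 0 < bII)
    (hτE : 0 < τE) (hτI : 0 < τI) (haE : 0 < aE) (haI : 0 < aI)
    (NIfun : ℝ → ℝ)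
    (hNIfun : ∀ NE : ℝ, 0 ≤ NE → NIfun NE ∈ Set.Ioo 0 (1 / τI) ∧
      NIfun NE * (τI + I2 VR VF bEE bEI bII aI ν NE (NIfun NE)) = 1)
    (Fd : ℝ → ℝ)
    (hFd : ∀ NE ∈ Set.Ioo (0 : ℝ) (1 / τE),
      HasDerivAt (fun x => x * (τE + I1 VR VF bEE bIE aE ν x (NIfun x))) (Fd NE) NE)
    (hA : Aconst VR VF bEE bIE bEI bII τE aE aI ν NIfun < 0)
    (hineq : -Aconst VR VF bEE bIE bEI bII τE aE aI ν NIfun * Itilde VR VF bIE τE aE NIfun <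
      τE * (Imin VR VF bEE bIE τE aE ν NIfun + τE)) :
    (∀ NE ∈ Set.Ioo (0 : ℝ) (1 / τE),
      Imin VR VF bEE bIE τE aE ν NIfun + τE +
        Aconst VR VF bEE bIE bEI bII τE aE aI ν NIfun / τE * Itilde VR VF bIE τE aE NIfun ≤
      Fd NE) ∧
    0 < Imin VR VF bEE bIE τE aE ν NIfun + τE +
      Aconst VR VF bEE bIE bEI bII τE aE aI ν NIfun / τE * Itilde VR VF bIE τE aE NIfun ∧
    StrictMonoOn (fun x => x * (τE + I1 VR VF bEE bIE aE ν x (NIfun x)))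
      (Set.Ioo 0 (1 / τE)) ∧
    ∃! p : ℝ × ℝ, p.1 ∈ Set.Ioo 0 (1 / τE) ∧ p.2 ∈ Set.Ioo 0 (1 / τI) ∧
      p.1 * (τE + I1 VR VF bEE bIE aE ν p.1 p.2) = 1 ∧
      p.2 * (τI + I2 VR VF bEE bEI bII aI ν p.1 p.2) = 1 := by
  set B := Imin VR VF bEE bIE τE aE ν NIfun + τE +
    Aconst VR VF bEE bIE bEI bII τE aE aI ν NIfun / τE * Itilde VR VF bIE τE aE NIfun
  set F := fun x => x * (τE + I1 VR VF bEE bIE aE ν x (NIfun x))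
  have hsI : 0 < √aI := sqrt_pos.2 haI
  have hrfI : VR / √aI < VF / √aI := div_lt_div_of_pos_right hV hsI
  have hτk : ∀ t, 0 < τI + Kt (VR / √aI) (VF / √aI) t := fun t =>
    add_pos hτI (Kt_pos hrfI t)
  have hN := fun x hx => (hNIfun x hx).2
  have hbound : ∀ x ∈ Ioo 0 (1 / τE), B ≤ Fd x := fun x hx => by
    obtain ⟨F', hF', hle⟩ :=
      exists_hasDerivAt_ge_bound hV hbEE.le hbIE.le hbEI hbII hτE hτI haE haI hN hA hx
    rwa [(hFd x hx).unique hF']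
  have hpos : 0 < B := add_add_div_mul_pos hτE hineq
  have hmono : StrictMonoOn F (Ioo 0 (1 / τE)) :=
    strictMonoOn_of_hasDerivWithinAt_pos (convex_Ioo _ _)
      (fun x hx => (hFd x hx).continuousAt.continuousWithinAt)
      (fun x hx => (hFd x (interior_subset hx)).hasDerivWithinAt)
      fun x hx => hpos.trans_le (hbound x (interior_subset hx))
  simp only [I2_eq_Kt] at hN hNIfun ⊢
  have hNcont := continuousOn_of_mul_eq_one (Kt_strictAnti hrfI) hτk hsI hbEI.le hbII hN
  obtain ⟨x₀, hx₀, hFx₀⟩ := exists_mem_Ioo_mul_add_eq_one hτE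
    ((continuousOn_I1_comp hV hNcont).mono Icc_subset_Ici_self) (I1_pos hV haE _ _)
  refine ⟨hbound, hpos, hmono, (x₀, NIfun x₀),
    ⟨hx₀, (hNIfun x₀ hx₀.1.le).1, hFx₀, hN x₀ hx₀.1.le⟩, ?_⟩
  rintro ⟨x, n⟩ ⟨hx, -, hFx, hn⟩
  obtain rfl : n = NIfun x :=
    eq_of_mul_eq_one_of_mul_eq_one (Kt_strictAnti hrfI) hτk hsI hbII.le hn (hN x hx.1.le)
  obtain rfl : x = x₀ := hmono.injOn hx hx₀ (hFx.trans hFx₀.symm)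
  rfl

theorem unique_steady_state_of_A_neg (VR VF bEE bIE bEI bII τE τI aE aI ν : ℝ)
    (hV : VR < VF) (hbEE : 0 < bEE) (hbIE : 0 < bIE) (hbEI : 0 < bEI) (hbII : 0 < bII)
    (hτE : 0 < τE) (hτI : 0 < τI) (haE : 0 < aE) (haI : 0 < aI) (hν : 0 ≤ ν)
    (NIfun : ℝ → ℝ)
    (hNIfun : ∀ NE : ℝ, 0 ≤ NE → NIfun NE ∈ Set.Ioo 0 (1 / τI) ∧
      NIfun NE * (τI + I2 VR VF bEE bEI bII aI ν NE (NIfun NE)) = 1)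
    (Fd : ℝ → ℝ)
    (hFd : ∀ NE ∈ Set.Ioo (0 : ℝ) (1 / τE),
      HasDerivAt (fun x => x * (τE + I1 VR VF bEE bIE aE ν x (NIfun x))) (Fd NE) NE)
    (hA : Aconst VR VF bEE bIE bEI bII τE aE aI ν NIfun < 0)
    (hineq : -Aconst VR VF bEE bIE bEI bII τE aE aI ν NIfun * Itilde VR VF bIE τE aE NIfun <
      τE * (Imin VR VF bEE bIE τE aE ν NIfun + τE)) :
    (∀ NE ∈ Set.Ioo (0 : ℝ) (1 / τE),
      Imin VR VF bEE bIE τE aE ν NIfun + τE +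
        Aconst VR VF bEE bIE bEI bII τE aE aI ν NIfun / τE * Itilde VR VF bIE τE aE NIfun ≤
      Fd NE) ∧
    0 < Imin VR VF bEE bIE τE aE ν NIfun + τE +
      Aconst VR VF bEE bIE bEI bII τE aE aI ν NIfun / τE * Itilde VR VF bIE τE aE NIfun ∧
    StrictMonoOn (fun x => x * (τE + I1 VR VF bEE bIE aE ν x (NIfun x)))
      (Set.Ioo 0 (1 / τE)) ∧
    ∃! p : ℝ × ℝ, p.1 ∈ Set.Ioo 0 (1 / τE) ∧ p.2 ∈ Set.Ioo 0 (1 / τI) ∧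
      p.1 * (τE + I1 VR VF bEE bIE aE ν p.1 p.2) = 1 ∧
      p.2 * (τI + I2 VR VF bEE bEI bII aI ν p.1 p.2) = 1 :=
  unique_steady_state_of_A_neg_general VR VF bEE bIE bEI bII τE τI aE aI ν hV hbEE hbIE hbEI hbII
    hτE hτI haE haI NIfun hNIfun Fd hFd hA hineq
end

section
/- Keeping all parameters except τ_E fixed, there exists T > 0 such that for all τ_E > T the inequality −A·Ĩ(τ_E) < τ_E·(I_m + τ_E) holds (where A, Ĩ(τ_E) and I_m are computed with the given τ_E), so that the map F(N_E) = N_E(τ_E + I_1(N_E,N_I(N_E))) is strictly increasing on (0,1/τ_E). -/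
set_option maxHeartbeats 2000000


/- STATEMENT 15: Keeping all parameters except τ_E fixed, there exists T > 0 such that for
all τ_E > T the inequality −A·Ĩ(τ_E) < τ_E·(I_m + τ_E) holds (where A, Ĩ(τ_E) and I_m are
computed with the given τ_E), so that F(N_E) = N_E(τ_E + I_1(N_E,N_I(N_E))) is strictly
increasing on (0,1/τ_E). -/


open MeasureTheory Real Set


noncomputable def Kfun (wR wF s : ℝ) : ℝ :=
  Real.exp (-s ^ 2 / 2) / s * (Real.exp (s * wF) - Real.exp (s * wR))

lemma K_def (wR wF : ℝ) : K wR wF = ∫ s in Set.Ioi (0 : ℝ), Kfun wR wF s := rfl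

noncomputable def gC (W : ℝ) : ℝ := ∫ s in Set.Ioi (0:ℝ), Real.exp (-s ^ 2 / 2 + W * s)

lemma gauss_integrable (W : ℝ) :
    IntegrableOn (fun s => Real.exp (-s ^ 2 / 2 + W * s)) (Set.Ioi (0:ℝ)) := by
  have h := integrable_exp_neg_mul_sq (by norm_num : (0:ℝ) < 1/2)
  have h2 := (h.comp_sub_right W).const_mul (Real.exp (W ^ 2 / 2))
  have he : (fun x => Real.exp (W ^ 2 / 2) * Real.exp (-(1/2) * (x - W) ^ 2))
      = fun s => Real.exp (-s ^ 2 / 2 + W * s) := by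
    funext s; rw [← Real.exp_add]; congr 1; ring
  exact (he ▸ h2).integrableOn

lemma gC_nonneg (W : ℝ) : 0 ≤ gC W :=
  setIntegral_nonneg measurableSet_Ioi fun s _ => (Real.exp_pos _).le

lemma gC_mono {W W' : ℝ} (h : W ≤ W') : gC W ≤ gC W' := by
  refine setIntegral_mono_on (gauss_integrable W) (gauss_integrable W') measurableSet_Ioi
    fun s hs => Real.exp_le_exp.mpr ?_
  have : 0 < s := hs
  nlinarith

lemma Kfun_nonneg {wR wF s : ℝ} (hw : wR ≤ wF) (hs : 0 < s) : 0 ≤ Kfun wR wF s := by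
  apply mul_nonneg (div_nonneg (Real.exp_pos _).le hs.le)
  have : Real.exp (s * wR) ≤ Real.exp (s * wF) :=
    Real.exp_le_exp.mpr (by nlinarith)
  linarith

lemma exp_diff_le {a b : ℝ} (h : b ≤ a) : Real.exp a - Real.exp b ≤ (a - b) * Real.exp a := by
  have h1 : Real.exp b = Real.exp (b - a) * Real.exp a := by rw [← Real.exp_add]; ring_nf
  have h2 := Real.add_one_le_exp (b - a)
  nlinarith [Real.exp_pos a]

lemma Kfun_le {wR wF : ℝ} (hw : wR ≤ wF) {s : ℝ} (hs : 0 < s) :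
    Kfun wR wF s ≤ (wF - wR) * Real.exp (-s ^ 2 / 2 + wF * s) := by
  have h1 : Real.exp (s * wF) - Real.exp (s * wR) ≤ s * (wF - wR) * Real.exp (s * wF) := by
    have := exp_diff_le (a := s * wF) (b := s * wR) (by nlinarith)
    nlinarith
  have h2 : Real.exp (-s ^ 2 / 2) / s * (s * (wF - wR) * Real.exp (s * wF))
      = (wF - wR) * Real.exp (-s ^ 2 / 2 + wF * s) := by
    rw [Real.exp_add]; field_simp
  calc Kfun wR wF s ≤ Real.exp (-s ^ 2 / 2) / s * (s * (wF - wR) * Real.exp (s * wF)) := by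
        apply mul_le_mul_of_nonneg_left h1 (div_nonneg (Real.exp_pos _).le hs.le)
    _ = _ := h2

lemma Kfun_integrableOn {wR wF : ℝ} (hw : wR ≤ wF) :
    IntegrableOn (Kfun wR wF) (Set.Ioi (0:ℝ)) := by
  have hmeas : AEStronglyMeasurable (Kfun wR wF) (volume.restrict (Set.Ioi (0:ℝ))) := by
    have c1 : ContinuousOn (fun s : ℝ => Real.exp (-s ^ 2 / 2) / s) (Set.Ioi 0) :=
      ContinuousOn.div (Continuous.continuousOn (by continuity)) continuousOn_id
        (fun s hs => ne_of_gt hs)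
    have c2 : Continuous fun s : ℝ => Real.exp (s * wF) - Real.exp (s * wR) := by continuity
    exact (c1.mul c2.continuousOn).aestronglyMeasurable measurableSet_Ioi
  refine Integrable.mono' ((gauss_integrable wF).const_mul (wF - wR)) hmeas ?_
  filter_upwards [ae_restrict_mem measurableSet_Ioi] with s hs
  rw [Real.norm_eq_abs, abs_of_nonneg (Kfun_nonneg hw hs)]
  exact Kfun_le hw hs

lemma K_nonneg {wR wF : ℝ} (hw : wR ≤ wF) : 0 ≤ K wR wF :=
  setIntegral_nonneg measurableSet_Ioi fun s hs => Kfun_nonneg hw hs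

lemma Kfun_shift (wR wF δ s : ℝ) :
    Kfun (wR + δ) (wF + δ) s = Real.exp (s * δ) * Kfun wR wF s := by
  unfold Kfun
  rw [show s * (wF + δ) = s * wF + s * δ by ring, show s * (wR + δ) = s * wR + s * δ by ring,
    Real.exp_add, Real.exp_add]
  ring

lemma K_shift_le {wR wF δ : ℝ} (hw : wR ≤ wF) (hδ : δ ≤ 0) :
    K (wR + δ) (wF + δ) ≤ K wR wF := by
  rw [K_def, K_def]
  refine setIntegral_mono_on (Kfun_integrableOn (by linarith)) (Kfun_integrableOn hw)
    measurableSet_Ioi fun s hs => ?_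
  have hs : (0:ℝ) < s := hs
  rw [Kfun_shift]
  have h1 : Real.exp (s * δ) ≤ 1 := Real.exp_le_one_iff.mpr (by nlinarith)
  nlinarith [Kfun_nonneg hw hs, Real.exp_pos (s * δ)]

lemma K_diff_le {wR wF δ W : ℝ} (hw : wR ≤ wF) (hδ : δ ≤ 0) (hW : wF ≤ W) :
    K wR wF - K (wR + δ) (wF + δ) ≤ (-δ) * gC W := by
  rw [K_def, K_def, ← integral_sub (Kfun_integrableOn hw) (Kfun_integrableOn (by linarith))]
  have hRHS : (-δ) * gC W = ∫ s in Set.Ioi (0:ℝ), (-δ) * Real.exp (-s ^ 2 / 2 + W * s) := by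
    rw [MeasureTheory.integral_const_mul]; rfl
  rw [hRHS]
  refine setIntegral_mono_on
    ((Kfun_integrableOn hw).sub (Kfun_integrableOn (by linarith)))
    (((gauss_integrable W).const_mul (-δ))) measurableSet_Ioi fun s hs => ?_
  have hs : (0:ℝ) < s := hs
  rw [Kfun_shift]
  -- Kfun wR wF s - exp(s δ) Kfun wR wF s = (1 - exp(sδ)) * Kfun ≤ (-sδ) * Kfun
  have h1 : 1 - Real.exp (s * δ) ≤ -(s * δ) := by
    nlinarith [Real.add_one_le_exp (s * δ)]
  have h2 : 0 ≤ 1 - Real.exp (s * δ) := by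
    have : Real.exp (s * δ) ≤ 1 := Real.exp_le_one_iff.mpr (by nlinarith)
    linarith
  have hK0 := Kfun_nonneg hw hs
  have h3 : Kfun wR wF s - Real.exp (s * δ) * Kfun wR wF s ≤ (-(s * δ)) * Kfun wR wF s := by
    nlinarith
  have h4 : s * Kfun wR wF s ≤ Real.exp (-s ^ 2 / 2 + W * s) := by
    have h5 : s * Kfun wR wF s = Real.exp (-s ^ 2 / 2) * (Real.exp (s * wF) - Real.exp (s * wR)) := by
      unfold Kfun; field_simp
    rw [h5, Real.exp_add]
    have h6 : Real.exp (s * wF) - Real.exp (s * wR) ≤ Real.exp (W * s) := by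
      have := Real.exp_le_exp.mpr (show s * wF ≤ W * s by nlinarith)
      have := Real.exp_pos (s * wR)
      linarith
    nlinarith [Real.exp_pos (-s ^ 2 / 2)]
  calc Kfun wR wF s - Real.exp (s * δ) * Kfun wR wF s ≤ (-(s * δ)) * Kfun wR wF s := h3
    _ = (-δ) * (s * Kfun wR wF s) := by ring
    _ ≤ (-δ) * Real.exp (-s ^ 2 / 2 + W * s) := by
        apply mul_le_mul_of_nonneg_left h4 (by linarith)

lemma K_lip {wR wF δ W : ℝ} (hw : wR ≤ wF) (hW1 : wF ≤ W) (hW2 : wF + δ ≤ W) :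
    |K (wR + δ) (wF + δ) - K wR wF| ≤ |δ| * gC W := by
  rcases le_or_gt δ 0 with hδ | hδ
  · rw [abs_of_nonpos (by linarith [K_shift_le hw hδ]), abs_of_nonpos hδ]
    have := K_diff_le hw hδ hW1
    linarith
  · have hw' : wR + δ ≤ wF + δ := by linarith
    have h1 : K ((wR + δ) + (-δ)) ((wF + δ) + (-δ)) ≤ K (wR + δ) (wF + δ) :=
      K_shift_le hw' (by linarith)
    have h2 : K (wR + δ) (wF + δ) - K ((wR + δ) + (-δ)) ((wF + δ) + (-δ)) ≤ (-(-δ)) * gC W :=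
      K_diff_le hw' (by linarith) hW2
    have he1 : wR + δ + (-δ) = wR := by ring
    have he2 : wF + δ + (-δ) = wF := by ring
    rw [he1, he2] at h1 h2
    rw [abs_of_nonneg (by linarith), abs_of_pos hδ]
    linarith

lemma K_pot_nonneg {VR VF v r : ℝ} (hV : VR ≤ VF) (hr : 0 < r) :
    0 ≤ K ((VR - v) / r) ((VF - v) / r) :=
  K_nonneg ((div_le_div_iff_of_pos_right hr).mpr (by linarith))

lemma K_pot_mono {VR VF v1 v2 r : ℝ} (hV : VR ≤ VF) (hr : 0 < r) (h : v1 ≤ v2) :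
    K ((VR - v2) / r) ((VF - v2) / r) ≤ K ((VR - v1) / r) ((VF - v1) / r) := by
  have e1 : (VR - v2) / r = (VR - v1) / r + (v1 - v2) / r := by ring
  have e2 : (VF - v2) / r = (VF - v1) / r + (v1 - v2) / r := by ring
  rw [e1, e2]
  exact K_shift_le ((div_le_div_iff_of_pos_right hr).mpr (by linarith))
    (div_nonpos_of_nonpos_of_nonneg (by linarith) hr.le)

lemma K_pot_lip {VR VF v1 v2 r W : ℝ} (hV : VR ≤ VF) (hr : 0 < r)
    (h1 : (VF - v1) / r ≤ W) (h2 : (VF - v2) / r ≤ W) :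
    |K ((VR - v2) / r) ((VF - v2) / r) - K ((VR - v1) / r) ((VF - v1) / r)|
      ≤ |v2 - v1| / r * gC W := by
  have e1 : (VR - v2) / r = (VR - v1) / r + (v1 - v2) / r := by ring
  have e2 : (VF - v2) / r = (VF - v1) / r + (v1 - v2) / r := by ring
  have h3 := K_lip (δ := (v1 - v2) / r) (W := W)
    ((div_le_div_iff_of_pos_right hr).mpr (show VR - v1 ≤ VF - v1 by linarith)) h1 (by rw [← e2]; exact h2)
  rw [← e1, ← e2] at h3
  have e3 : |(v1 - v2) / r| = |v2 - v1| / r := by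
    rw [abs_div, abs_of_pos hr, abs_sub_comm]
  rw [e3] at h3
  exact h3

theorem ineq_and_strictMono_for_large_tauE (VR VF bEE bIE bEI bII τI aE aI ν : ℝ)
    (hV : VR < VF) (hbEE : 0 < bEE) (hbIE : 0 < bIE) (hbEI : 0 < bEI) (hbII : 0 < bII)
    (hτI : 0 < τI) (haE : 0 < aE) (haI : 0 < aI) (hν : 0 ≤ ν)
    (NIfun : ℝ → ℝ)
    (hNIfun : ∀ NE : ℝ, 0 ≤ NE → NIfun NE ∈ Set.Ioo 0 (1 / τI) ∧
      NIfun NE * (τI + I2 VR VF bEE bEI bII aI ν NE (NIfun NE)) = 1) :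
    ∃ T > 0, ∀ τE : ℝ, T < τE →
      (-Aconst VR VF bEE bIE bEI bII τE aE aI ν NIfun * Itilde VR VF bIE τE aE NIfun <
        τE * (Imin VR VF bEE bIE τE aE ν NIfun + τE)) ∧
      StrictMonoOn (fun x => x * (τE + I1 VR VF bEE bIE aE ν x (NIfun x)))
        (Set.Ioo 0 (1 / τE)) := by
  have hsE : 0 < Real.sqrt aE := Real.sqrt_pos.mpr haE
  have hsI : 0 < Real.sqrt aI := Real.sqrt_pos.mpr haI
  set W2 : ℝ := (|VF| + bII * (1 / τI) + |bEI - bEE| * ν) / Real.sqrt aI with hW2def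
  set W1 : ℝ := (|VF| + bIE * (1 / τI)) / Real.sqrt aE with hW1def
  set LN : ℝ := bEI * gC W2 / (τI ^ 2 * Real.sqrt aI) with hLNdef
  set LE : ℝ := (bEE + bIE * LN) / Real.sqrt aE * gC W1 with hLEdef
  set Cb : ℝ := bEE / Real.sqrt aE * gC ((bIE * (1 / τI) + VF) / Real.sqrt aE) with hCbdef
  have hLN0 : 0 ≤ LN := by
    rw [hLNdef]
    exact div_nonneg (mul_nonneg hbEI.le (gC_nonneg _)) (by positivity)
  have hLE0 : 0 ≤ LE := by
    rw [hLEdef]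
    exact mul_nonneg (div_nonneg (by nlinarith) hsE.le) (gC_nonneg _)
  have hCb0 : 0 ≤ Cb := by
    rw [hCbdef]
    exact mul_nonneg (div_nonneg hbEE.le hsE.le) (gC_nonneg _)
  -- basic facts about I2
  have hI2nonneg : ∀ x NI : ℝ, 0 ≤ I2 VR VF bEE bEI bII aI ν x NI := by
    intro x NI; simp only [I2]; exact K_pot_nonneg hV.le hsI
  have hI2monoNE : ∀ x y NI : ℝ, x ≤ y →
      I2 VR VF bEE bEI bII aI ν y NI ≤ I2 VR VF bEE bEI bII aI ν x NI := by
    intro x y NI h; simp only [I2]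
    exact K_pot_mono hV.le hsI (by nlinarith [mul_nonneg hbEI.le (sub_nonneg.mpr h)])
  have hI2monoNI : ∀ x NI NI' : ℝ, NI ≤ NI' →
      I2 VR VF bEE bEI bII aI ν x NI ≤ I2 VR VF bEE bEI bII aI ν x NI' := by
    intro x NI NI' h; simp only [I2]
    exact K_pot_mono hV.le hsI (by nlinarith [mul_nonneg hbII.le (sub_nonneg.mpr h)])
  have hv2W : ∀ x NI : ℝ, 0 ≤ x → 0 < NI → NI < 1 / τI →
      (VF - (bEI * x - bII * NI + (bEI - bEE) * ν)) / Real.sqrt aI ≤ W2 := by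
    intro x NI hx h1 h2
    rw [hW2def]
    apply (div_le_div_iff_of_pos_right hsI).mpr
    have a1 : VF ≤ |VF| := le_abs_self VF
    have a2 : -((bEI - bEE) * ν) ≤ |bEI - bEE| * ν := by
      have h3 := neg_abs_le (bEI - bEE)
      nlinarith [abs_nonneg (bEI - bEE)]
    nlinarith [mul_nonneg hbEI.le hx, mul_le_mul_of_nonneg_left h2.le hbII.le]
  have hI2lipNE : ∀ x y NI : ℝ, 0 ≤ x → x ≤ y → 0 < NI → NI < 1 / τI →
      I2 VR VF bEE bEI bII aI ν x NI - I2 VR VF bEE bEI bII aI ν y NI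
        ≤ bEI * (y - x) / Real.sqrt aI * gC W2 := by
    intro x y NI hx hxy h1 h2
    have h3 := K_pot_lip (VR := VR) (VF := VF)
      (v1 := bEI * x - bII * NI + (bEI - bEE) * ν)
      (v2 := bEI * y - bII * NI + (bEI - bEE) * ν) (r := Real.sqrt aI) (W := W2)
      hV.le hsI (hv2W x NI hx h1 h2) (hv2W y NI (le_trans hx hxy) h1 h2)
    simp only [I2]
    have e : |(bEI * y - bII * NI + (bEI - bEE) * ν) - (bEI * x - bII * NI + (bEI - bEE) * ν)|
        = bEI * (y - x) := by
      rw [show (bEI * y - bII * NI + (bEI - bEE) * ν) - (bEI * x - bII * NI + (bEI - bEE) * ν)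
        = bEI * (y - x) by ring]
      exact abs_of_nonneg (by nlinarith [mul_nonneg hbEI.le (sub_nonneg.mpr hxy)])
    rw [e] at h3
    exact le_trans (le_trans (le_abs_self _) (le_of_eq (abs_sub_comm _ _))) h3
  -- monotonicity and Lipschitz bound for NIfun
  have hNImono : ∀ x y : ℝ, 0 ≤ x → x ≤ y → NIfun x ≤ NIfun y := by
    intro x y hx hxy
    obtain ⟨⟨hu0, hu1⟩, hux⟩ := hNIfun x hx
    obtain ⟨⟨hv0, hv1⟩, hvy⟩ := hNIfun y (hx.trans hxy)
    by_contra hcon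
    push_neg at hcon
    have h4 := hI2monoNE x y (NIfun y) hxy
    have hm := hI2monoNI x (NIfun y) (NIfun x) hcon.le
    have hn := hI2nonneg x (NIfun y)
    set p := I2 VR VF bEE bEI bII aI ν x (NIfun y) with hp
    set q := I2 VR VF bEE bEI bII aI ν y (NIfun y) with hq
    set r := I2 VR VF bEE bEI bII aI ν x (NIfun x) with hr
    clear_value p q r
    have h1 : 1 ≤ NIfun y * (τI + p) := by
      nlinarith [mul_nonneg hv0.le (sub_nonneg.mpr h4)]
    have h2 : NIfun y * (τI + p) < NIfun x * (τI + r) := by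
      nlinarith [mul_pos (sub_pos.mpr hcon) hτI, mul_nonneg hv0.le (sub_nonneg.mpr hm),
        mul_nonneg (sub_pos.mpr hcon).le hn]
    rw [hux] at h2; linarith
  have hNIlip : ∀ x y : ℝ, 0 ≤ x → x ≤ y → NIfun y - NIfun x ≤ LN * (y - x) := by
    intro x y hx hxy
    obtain ⟨⟨hu0, hu1⟩, hux⟩ := hNIfun x hx
    obtain ⟨⟨hv0, hv1⟩, hvy⟩ := hNIfun y (hx.trans hxy)
    have huv := hNImono x y hx hxy
    have hm := hI2monoNI x (NIfun x) (NIfun y) huv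
    have hmono := hI2monoNE x y (NIfun y) hxy
    have hlip := hI2lipNE x y (NIfun y) hx hxy hv0 hv1
    have hn1 := hI2nonneg x (NIfun y)
    set p := I2 VR VF bEE bEI bII aI ν x (NIfun y) with hp
    set q := I2 VR VF bEE bEI bII aI ν y (NIfun y) with hq
    set r := I2 VR VF bEE bEI bII aI ν x (NIfun x) with hr
    clear_value p q r
    have key1 : τI * (NIfun y - NIfun x)
        ≤ NIfun y * (τI + p) - NIfun x * (τI + r) := by
      nlinarith [mul_nonneg (sub_nonneg.mpr huv) hn1,
        mul_nonneg hu0.le (sub_nonneg.mpr hm)]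
    have key2 : NIfun y * (τI + p) - NIfun x * (τI + r)
        = NIfun y * (p - q) := by
      rw [hux, ← hvy]; ring
    have key3 : NIfun y * (p - q)
        ≤ (1 / τI) * (bEI * (y - x) / Real.sqrt aI * gC W2) := by
      apply mul_le_mul hv1.le hlip (by linarith) (by positivity)
    have heq : (1 / τI) * (bEI * (y - x) / Real.sqrt aI * gC W2) = τI * (LN * (y - x)) := by
      rw [hLNdef]; field_simp
    rw [key2] at key1
    have hfin : τI * (NIfun y - NIfun x) ≤ τI * (LN * (y - x)) := by linarith
    exact (mul_le_mul_iff_right₀ hτI).mp hfin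
  -- facts about I1
  have hI1nonneg : ∀ x NI : ℝ, 0 ≤ I1 VR VF bEE bIE aE ν x NI := by
    intro x NI; simp only [I1]; exact K_pot_nonneg hV.le hsE
  have hv1W : ∀ x : ℝ, 0 ≤ x →
      (VF - (bEE * x - bIE * NIfun x + (bEE - bEE) * ν)) / Real.sqrt aE ≤ W1 := by
    intro x hx
    obtain ⟨⟨h0, h1⟩, _⟩ := hNIfun x hx
    rw [hW1def]
    apply (div_le_div_iff_of_pos_right hsE).mpr
    nlinarith [le_abs_self VF, mul_nonneg hbEE.le hx, mul_le_mul_of_nonneg_left h1.le hbIE.le]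
  have hI1lip : ∀ x y : ℝ, 0 ≤ x → x ≤ y →
      |I1 VR VF bEE bIE aE ν y (NIfun y) - I1 VR VF bEE bIE aE ν x (NIfun x)|
        ≤ LE * (y - x) := by
    intro x y hx hxy
    have h3 := K_pot_lip (VR := VR) (VF := VF)
      (v1 := bEE * x - bIE * NIfun x + (bEE - bEE) * ν)
      (v2 := bEE * y - bIE * NIfun y + (bEE - bEE) * ν) (r := Real.sqrt aE) (W := W1)
      hV.le hsE (hv1W x hx) (hv1W y (hx.trans hxy))
    simp only [I1]
    refine le_trans h3 ?_
    have hΔ : |(bEE * y - bIE * NIfun y + (bEE - bEE) * ν)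
        - (bEE * x - bIE * NIfun x + (bEE - bEE) * ν)| ≤ (bEE + bIE * LN) * (y - x) := by
      have hd1 := hNImono x y hx hxy
      have hd2 := hNIlip x y hx hxy
      rw [abs_le]
      constructor <;>
        nlinarith [mul_le_mul_of_nonneg_left hd2 hbIE.le,
          mul_nonneg hbIE.le (sub_nonneg.mpr hd1),
          mul_nonneg hbEE.le (sub_nonneg.mpr hxy),
          mul_nonneg (mul_nonneg hbIE.le hLN0) (sub_nonneg.mpr hxy)]
    refine le_trans (mul_le_mul_of_nonneg_right ((div_le_div_iff_of_pos_right hsE).mpr hΔ) (gC_nonneg _))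
      (le_of_eq ?_)
    rw [hLEdef]; ring
  -- choose T
  refine ⟨1 + LE + Cb, by positivity, fun τE hτE => ?_⟩
  have hτE1 : (1:ℝ) < τE := by linarith
  have hτE0 : (0:ℝ) < τE := by linarith
  have hinv0 : (0:ℝ) < 1 / τE := by positivity
  have hinv1 : 1 / τE ≤ 1 := by rw [div_le_one hτE0]; linarith
  constructor
  · -- the inequality
    have hImin : 0 ≤ Imin VR VF bEE bIE τE aE ν NIfun := by
      simp only [Imin]
      apply le_csInf ((Set.nonempty_Icc.mpr hinv0.le).image _)
      rintro b ⟨x, hx, rfl⟩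
      exact hI1nonneg x (NIfun x)
    have hIfun_nonneg : ∀ NE : ℝ, 0 ≤ Ifun VR VF bEE bEI bII aI ν NIfun NE := by
      intro NE
      apply MeasureTheory.setIntegral_nonneg measurableSet_Ioi
      intro s hs
      have hs0 : (0:ℝ) < s := hs
      have he : Real.exp (s * VR / Real.sqrt aI) ≤ Real.exp (s * VF / Real.sqrt aI) :=
        Real.exp_le_exp.mpr ((div_le_div_iff_of_pos_right hsI).mpr (by nlinarith))
      exact mul_nonneg (mul_nonneg (Real.exp_pos _).le (Real.exp_pos _).le) (by linarith)
    have hIt0 : 0 ≤ Itilde VR VF bIE τE aE NIfun := by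
      apply MeasureTheory.setIntegral_nonneg measurableSet_Ioi
      intro s hs
      have hs0 : (0:ℝ) < s := hs
      have he : Real.exp (s * VR / Real.sqrt aE) ≤ Real.exp (s * VF / Real.sqrt aE) :=
        Real.exp_le_exp.mpr ((div_le_div_iff_of_pos_right hsE).mpr (by nlinarith))
      exact mul_nonneg (mul_nonneg (Real.exp_pos _).le (Real.exp_pos _).le) (by linarith)
    obtain ⟨⟨hN0, hN1⟩, _⟩ := hNIfun (1 / τE) hinv0.le
    have hItle : Itilde VR VF bIE τE aE NIfun
        ≤ gC ((bIE * (1 / τI) + VF) / Real.sqrt aE) := by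
      simp only [Itilde, gC]
      apply MeasureTheory.integral_mono_of_nonneg
      · filter_upwards [MeasureTheory.ae_restrict_mem measurableSet_Ioi] with s hs
        have hs0 : (0:ℝ) < s := hs
        have he : Real.exp (s * VR / Real.sqrt aE) ≤ Real.exp (s * VF / Real.sqrt aE) :=
          Real.exp_le_exp.mpr ((div_le_div_iff_of_pos_right hsE).mpr (by nlinarith))
        exact mul_nonneg (mul_nonneg (Real.exp_pos _).le (Real.exp_pos _).le) (by linarith)
      · exact gauss_integrable _
      · filter_upwards [MeasureTheory.ae_restrict_mem measurableSet_Ioi] with s hs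
        have hs0 : (0:ℝ) < s := hs
        have e1 : Real.exp (s * bIE * NIfun (1 / τE) / Real.sqrt aE)
            ≤ Real.exp (s * bIE * (1 / τI) / Real.sqrt aE) :=
          Real.exp_le_exp.mpr ((div_le_div_iff_of_pos_right hsE).mpr
            (by nlinarith [mul_pos hs0 hbIE]))
        have he : Real.exp (s * VR / Real.sqrt aE) ≤ Real.exp (s * VF / Real.sqrt aE) :=
          Real.exp_le_exp.mpr ((div_le_div_iff_of_pos_right hsE).mpr (by nlinarith))
        calc Real.exp (-s ^ 2 / 2) * Real.exp (s * bIE * NIfun (1 / τE) / Real.sqrt aE) *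
              (Real.exp (s * VF / Real.sqrt aE) - Real.exp (s * VR / Real.sqrt aE))
            ≤ Real.exp (-s ^ 2 / 2) * Real.exp (s * bIE * (1 / τI) / Real.sqrt aE) *
              Real.exp (s * VF / Real.sqrt aE) := by
              apply mul_le_mul
                (mul_le_mul_of_nonneg_left e1 (Real.exp_pos _).le)
                (by linarith [Real.exp_pos (s * VR / Real.sqrt aE)])
                (by linarith)
                (mul_nonneg (Real.exp_pos _).le (Real.exp_pos _).le)
          _ = Real.exp (-s ^ 2 / 2 + (bIE * (1 / τI) + VF) / Real.sqrt aE * s) := by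
              rw [← Real.exp_add, ← Real.exp_add]
              congr 1
              field_simp
              ring
    have hA : -Aconst VR VF bEE bIE bEI bII τE aE aI ν NIfun ≤ bEE / Real.sqrt aE := by
      simp only [Aconst]
      have hfrac : 0 ≤ bIE / Real.sqrt aE *
          (bEI * NIfun 0 ^ 2 * Ifun VR VF bEE bEI bII aI ν NIfun (1 / τE) /
            (Real.sqrt aI + bII * NIfun (1 / τE) ^ 2 * Ifun VR VF bEE bEI bII aI ν NIfun 0)) := by
        apply mul_nonneg (div_nonneg hbIE.le hsE.le)
        apply div_nonneg
        · exact mul_nonneg (mul_nonneg hbEI.le (sq_nonneg _)) (hIfun_nonneg _)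
        · nlinarith [hIfun_nonneg (0:ℝ), sq_nonneg (NIfun (1 / τE)),
            mul_nonneg (mul_nonneg hbII.le (sq_nonneg (NIfun (1 / τE)))) (hIfun_nonneg 0)]
      linarith
    have hchain : -Aconst VR VF bEE bIE bEI bII τE aE aI ν NIfun *
        Itilde VR VF bIE τE aE NIfun ≤ Cb := by
      calc -Aconst VR VF bEE bIE bEI bII τE aE aI ν NIfun * Itilde VR VF bIE τE aE NIfun
          ≤ bEE / Real.sqrt aE * Itilde VR VF bIE τE aE NIfun :=
            mul_le_mul_of_nonneg_right hA hIt0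
        _ ≤ bEE / Real.sqrt aE * gC ((bIE * (1 / τI) + VF) / Real.sqrt aE) :=
            mul_le_mul_of_nonneg_left hItle (div_nonneg hbEE.le hsE.le)
        _ = Cb := by rw [hCbdef]
    set AI := -Aconst VR VF bEE bIE bEI bII τE aE aI ν NIfun * Itilde VR VF bIE τE aE NIfun
      with hAI
    set Im := Imin VR VF bEE bIE τE aE ν NIfun with hIm
    clear_value AI Im
    have hImin' := mul_nonneg hτE0.le hImin
    nlinarith [mul_lt_mul_of_pos_left hτE1 hτE0]
  · -- strict monotonicity
    intro x hx y hy hxy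
    simp only
    obtain ⟨hx0, hx1⟩ := hx
    obtain ⟨hy0, hy1⟩ := hy
    have hylt : y ≤ 1 := le_trans hy1.le hinv1
    have hd := hI1lip x y hx0.le hxy.le
    have hd1 := (abs_le.mp hd).1
    have hax := hI1nonneg x (NIfun x)
    set a := I1 VR VF bEE bIE aE ν x (NIfun x) with ha
    set b := I1 VR VF bEE bIE aE ν y (NIfun y) with hb
    clear_value a b
    nlinarith [mul_pos (sub_pos.mpr hxy) (show (0:ℝ) < τE - LE by linarith),
      mul_nonneg (sub_nonneg.mpr hxy.le) hax,
      mul_le_mul_of_nonneg_left hd1 hy0.le, hLE0,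
      mul_nonneg hLE0 (sub_nonneg.mpr hxy.le)]
end
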